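/- arXiv:2409.13615 — 5 statements merged into one kernel-verified Lean document; each statement's English description precedes it below -/
import Mathlib

section
/- Let p ∈ [1,∞), α ∈ (1/p, ∞), β ∈ [0, α - 1/p), and let (Ψ_n)_{n∈ℕ} be a sequence of non-negative real-valued random variables. Then ‖sup_n n^β Ψ_n‖_{L^p} ≤ ((α-β)/(α - 1/p - β))^{1/p} · sup_n n^α ‖Ψ_n‖_{L^p}. -/
open MeasureTheory ENNReal

/-- Partial sums of `n ↦ n ^ (-s)` (starting at `n = 0`, whose term vanishes) are bounded
by `s / (s - 1)` when `s > 1`. -/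
lemma kc_partial_sum_le (s : ℝ) (hs : 1 < s) (N : ℕ) :
    ∑ i ∈ Finset.range N, ((i : ℝ)) ^ (-s) ≤ s / (s - 1) := by
  have hs0 : 0 < s - 1 := by linarith
  have hdiv : s / (s - 1) = 1 + 1 / (s - 1) := by field_simp; ring
  -- main auxiliary bound: ∑_{i<k} (i+2)^{-s} ≤ 1/(s-1)
  have haux : ∀ k : ℕ, ∑ i ∈ Finset.range k, (((i : ℝ) + 2)) ^ (-s) ≤ 1 / (s - 1) := by
    intro k
    have hanti : AntitoneOn (fun x : ℝ => x ^ (-s)) (Set.Icc (1 : ℝ) (1 + (k : ℝ))) := by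
      intro x hx y hy hxy
      exact Real.rpow_le_rpow_of_nonpos (lt_of_lt_of_le one_pos hx.1) hxy
        (by linarith)
    have hsum := hanti.sum_le_integral
    have hint : (∫ x in (1:ℝ)..(1 + (k : ℝ)), x ^ (-s))
        = ((1 + (k : ℝ)) ^ (-s + 1) - 1 ^ (-s + 1)) / (-s + 1) := by
      rw [integral_rpow]
      right
      constructor
      · intro h; linarith [neg_eq_iff_eq_neg.mp h]
      · rw [Set.uIcc_of_le (le_add_of_nonneg_right (Nat.cast_nonneg k))]
        intro h
        have := (Set.mem_Icc.mp h).1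
        linarith
    have hle : ((1 + (k : ℝ)) ^ (-s + 1) - 1 ^ (-s + 1)) / (-s + 1) ≤ 1 / (s - 1) := by
      rw [Real.one_rpow]
      have h1 : (0:ℝ) ≤ (1 + (k : ℝ)) ^ (-s + 1) := Real.rpow_nonneg (by positivity) _
      have heq : ((1 + (k : ℝ)) ^ (-s + 1) - 1) / (-s + 1)
          = (1 - (1 + (k : ℝ)) ^ (-s + 1)) / (s - 1) := by
        rw [div_eq_div_iff (by linarith) (by linarith)]
        ring
      rw [heq, div_le_div_iff₀ hs0 hs0]
      nlinarith
    calc ∑ i ∈ Finset.range k, (((i : ℝ) + 2)) ^ (-s)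
        = ∑ i ∈ Finset.range k, (fun x : ℝ => x ^ (-s)) (1 + ((i + 1 : ℕ) : ℝ)) := by
          apply Finset.sum_congr rfl
          intro i _
          push_cast
          ring_nf
      _ ≤ ∫ x in (1:ℝ)..(1 + (k : ℝ)), x ^ (-s) := hsum
      _ ≤ 1 / (s - 1) := by rw [hint]; exact hle
  rcases N with _ | m
  · simp; positivity
  rw [Finset.sum_range_succ']
  have h0 : ((0 : ℕ) : ℝ) ^ (-s) = 0 := by
    rw [Nat.cast_zero, Real.zero_rpow (by intro h; linarith [neg_eq_zero.mp h])]
  rw [h0, add_zero]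
  rcases m with _ | k
  · simp; rw [hdiv]; positivity
  rw [Finset.sum_range_succ']
  have h1 : (((0 : ℕ) + 1 : ℕ) : ℝ) ^ (-s) = 1 := by norm_num
  rw [h1, hdiv]
  have : ∑ i ∈ Finset.range k, (((i + 1 + 1 : ℕ) : ℝ)) ^ (-s)
      = ∑ i ∈ Finset.range k, (((i : ℝ) + 2)) ^ (-s) := by
    apply Finset.sum_congr rfl; intro i _; push_cast; ring_nf
  rw [this, add_comm (1 : ℝ)]
  exact add_le_add_left (haux k) 1

/-- `∑_{n ≥ 1} n^{-s} ≤ s/(s-1)` in `ℝ≥0∞`, for `s > 1`. -/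
lemma kc_tsum_le (s : ℝ) (hs : 1 < s) :
    ∑' n : ℕ+, ENNReal.ofReal ((n : ℝ) ^ (-s)) ≤ ENNReal.ofReal (s / (s - 1)) := by
  have hsummable : Summable (fun n : ℕ => ((n : ℝ)) ^ (-s)) :=
    Real.summable_nat_rpow.mpr (by linarith)
  have hnonneg : ∀ n : ℕ, 0 ≤ ((n : ℝ)) ^ (-s) := fun n => Real.rpow_nonneg n.cast_nonneg _
  calc ∑' n : ℕ+, ENNReal.ofReal ((n : ℝ) ^ (-s))
      ≤ ∑' n : ℕ, ENNReal.ofReal ((n : ℝ) ^ (-s)) := by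
        exact ENNReal.tsum_comp_le_tsum_of_injective (fun a b h => PNat.coe_injective h)
          (fun n : ℕ => ENNReal.ofReal ((n : ℝ) ^ (-s)))
    _ = ENNReal.ofReal (∑' n : ℕ, ((n : ℝ)) ^ (-s)) :=
        (ENNReal.ofReal_tsum_of_nonneg hnonneg hsummable).symm
    _ ≤ ENNReal.ofReal (s / (s - 1)) := by
        apply ENNReal.ofReal_le_ofReal
        exact Summable.tsum_le_of_sum_range_le hsummable (kc_partial_sum_le s hs)

/-- Lemma 7.1 (KC L^p lemma): for `p ∈ [1,∞)`, `α ∈ (1/p,∞)`, `β ∈ [0, α - 1/p)` and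
non-negative random variables `Ψ n`,
`‖sup_n n^β Ψ_n‖_{L^p} ≤ ((α-β)/(α-1/p-β))^{1/p} · sup_n n^α ‖Ψ_n‖_{L^p}`. -/
theorem stmt_0 {Ω : Type*} [MeasurableSpace Ω] (μ : Measure Ω) [IsProbabilityMeasure μ]
    (p α β : ℝ) (hp : 1 ≤ p) (hα : 1 / p < α) (hβ0 : 0 ≤ β) (hβ : β < α - 1 / p)
    (Ψ : ℕ+ → Ω → ℝ) (hmeas : ∀ n, Measurable (Ψ n)) (hpos : ∀ n ω, 0 ≤ Ψ n ω) :
    (∫⁻ ω, (⨆ n : ℕ+, ENNReal.ofReal ((n : ℝ) ^ β * Ψ n ω)) ^ p ∂μ) ^ (1 / p)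
      ≤ ENNReal.ofReal (((α - β) / (α - 1 / p - β)) ^ (1 / p)) *
        ⨆ n : ℕ+, ENNReal.ofReal ((n : ℝ) ^ α) *
          (∫⁻ ω, ENNReal.ofReal (Ψ n ω) ^ p ∂μ) ^ (1 / p) := by
  have hp0 : (0:ℝ) < p := lt_of_lt_of_le one_pos hp
  have hp0' : p ≠ 0 := ne_of_gt hp0
  have hip : (0:ℝ) < 1 / p := by positivity
  set s : ℝ := (α - β) * p with hs_def
  have hs1 : 1 < s := by
    have h1 : 1 / p < α - β := by linarith
    calc (1:ℝ) = (1/p) * p := by field_simp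
      _ < (α - β) * p := by exact mul_lt_mul_of_pos_right h1 hp0
  set S := ⨆ n : ℕ+, ENNReal.ofReal ((n : ℝ) ^ α) *
      (∫⁻ ω, ENNReal.ofReal (Ψ n ω) ^ p ∂μ) ^ (1 / p) with hS
  set I : ℕ+ → ℝ≥0∞ := fun n => ∫⁻ ω, ENNReal.ofReal (Ψ n ω) ^ p ∂μ with hI
  have hnpos : ∀ n : ℕ+, (0:ℝ) < (n : ℝ) := fun n => by exact_mod_cast n.pos
  -- Each I n is controlled by S
  have hIn : ∀ n : ℕ+, I n ≤ ENNReal.ofReal ((n : ℝ) ^ (-(α * p))) * S ^ p := by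
    intro n
    have hane0 : ENNReal.ofReal ((n : ℝ) ^ α) ≠ 0 := by
      simp [ENNReal.ofReal_eq_zero, not_le]
      exact Real.rpow_pos_of_pos (hnpos n) α
    have hanet : ENNReal.ofReal ((n : ℝ) ^ α) ≠ ⊤ := ENNReal.ofReal_ne_top
    have h1 : ENNReal.ofReal ((n : ℝ) ^ α) * (I n) ^ (1/p) ≤ S := le_iSup
      (fun m : ℕ+ => ENNReal.ofReal ((m : ℝ) ^ α) *
        (∫⁻ ω, ENNReal.ofReal (Ψ m ω) ^ p ∂μ) ^ (1/p)) n
    have h2 : (I n) ^ (1/p) ≤ (ENNReal.ofReal ((n : ℝ) ^ α))⁻¹ * S := by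
      have := mul_le_mul_right h1 (ENNReal.ofReal ((n : ℝ) ^ α))⁻¹
      rwa [← mul_assoc, ENNReal.inv_mul_cancel hane0 hanet, one_mul] at this
    have h3 : I n ≤ ((ENNReal.ofReal ((n : ℝ) ^ α))⁻¹ * S) ^ p := by
      have h4 := ENNReal.rpow_le_rpow h2 hp0.le
      rwa [← ENNReal.rpow_mul, one_div_mul_cancel hp0', ENNReal.rpow_one] at h4
    refine h3.trans_eq ?_
    rw [ENNReal.mul_rpow_of_nonneg _ _ hp0.le, ENNReal.inv_rpow]
    congr 1
    rw [ENNReal.ofReal_rpow_of_pos (Real.rpow_pos_of_pos (hnpos n) α),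
      ← Real.rpow_mul (hnpos n).le,
      ← ENNReal.ofReal_inv_of_pos (Real.rpow_pos_of_pos (hnpos n) (α * p)),
      ← Real.rpow_neg (hnpos n).le]
  -- pointwise: (sup aₙ)^p ≤ ∑ aₙ^p
  have hsup_pow : ∀ (a : ℕ+ → ℝ≥0∞), (⨆ n, a n) ^ p ≤ ∑' n, (a n) ^ p := by
    intro a
    have h : (⨆ n, a n) ≤ (∑' n, (a n) ^ p) ^ (1/p) := by
      apply iSup_le
      intro n
      have h1 : (a n) ^ p ≤ ∑' m, (a m) ^ p := ENNReal.le_tsum n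
      have h2 := ENNReal.rpow_le_rpow h1 hip.le
      rwa [← ENNReal.rpow_mul, mul_one_div_cancel hp0', ENNReal.rpow_one] at h2
    have h3 := ENNReal.rpow_le_rpow h hp0.le
    rwa [← ENNReal.rpow_mul, one_div_mul_cancel hp0', ENNReal.rpow_one] at h3
  -- measurability
  have hm : ∀ n : ℕ+, Measurable (fun ω => ENNReal.ofReal ((n : ℝ) ^ β * Ψ n ω) ^ p) := by
    intro n
    exact (((hmeas n).const_mul _).ennreal_ofReal).pow_const p |>.mono le_rfl le_rfl
      |>.comp measurable_id |>.mono le_rfl le_rfl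
  -- main integral bound
  have hmain : (∫⁻ ω, (⨆ n : ℕ+, ENNReal.ofReal ((n : ℝ) ^ β * Ψ n ω)) ^ p ∂μ)
      ≤ ENNReal.ofReal (s / (s - 1)) * S ^ p := by
    calc (∫⁻ ω, (⨆ n : ℕ+, ENNReal.ofReal ((n : ℝ) ^ β * Ψ n ω)) ^ p ∂μ)
        ≤ ∫⁻ ω, ∑' n : ℕ+, ENNReal.ofReal ((n : ℝ) ^ β * Ψ n ω) ^ p ∂μ :=
          lintegral_mono fun ω => hsup_pow _
      _ = ∑' n : ℕ+, ∫⁻ ω, ENNReal.ofReal ((n : ℝ) ^ β * Ψ n ω) ^ p ∂μ :=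
          lintegral_tsum fun n => (hm n).aemeasurable
      _ = ∑' n : ℕ+, ENNReal.ofReal ((n : ℝ) ^ β) ^ p * I n := by
          congr 1
          ext n
          have : ∀ ω, ENNReal.ofReal ((n : ℝ) ^ β * Ψ n ω) ^ p
              = ENNReal.ofReal ((n : ℝ) ^ β) ^ p * ENNReal.ofReal (Ψ n ω) ^ p := by
            intro ω
            rw [ENNReal.ofReal_mul (Real.rpow_nonneg (hnpos n).le β),
              ENNReal.mul_rpow_of_nonneg _ _ hp0.le]
          simp_rw [this]
          rw [lintegral_const_mul _ (((hmeas n).ennreal_ofReal).pow_const p)]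
      _ ≤ ∑' n : ℕ+, ENNReal.ofReal ((n : ℝ) ^ (-s)) * S ^ p := by
          apply ENNReal.tsum_le_tsum
          intro n
          calc ENNReal.ofReal ((n : ℝ) ^ β) ^ p * I n
              ≤ ENNReal.ofReal ((n : ℝ) ^ β) ^ p *
                (ENNReal.ofReal ((n : ℝ) ^ (-(α * p))) * S ^ p) :=
                mul_le_mul_right (hIn n) _
            _ = ENNReal.ofReal ((n : ℝ) ^ (-s)) * S ^ p := by
                rw [ENNReal.ofReal_rpow_of_pos (Real.rpow_pos_of_pos (hnpos n) β),
                  ← Real.rpow_mul (hnpos n).le, ← mul_assoc,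
                  ← ENNReal.ofReal_mul (Real.rpow_nonneg (hnpos n).le _),
                  ← Real.rpow_add (hnpos n)]
                have hexp : β * p + -(α * p) = -s := by rw [hs_def]; ring
                rw [hexp]
      _ = (∑' n : ℕ+, ENNReal.ofReal ((n : ℝ) ^ (-s))) * S ^ p := ENNReal.tsum_mul_right
      _ ≤ ENNReal.ofReal (s / (s - 1)) * S ^ p :=
          mul_le_mul_left (kc_tsum_le s hs1) _
  -- conclude
  have hfinal := ENNReal.rpow_le_rpow hmain hip.le
  rw [ENNReal.mul_rpow_of_nonneg _ _ hip.le, ← ENNReal.rpow_mul,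
    mul_one_div_cancel hp0', ENNReal.rpow_one] at hfinal
  refine hfinal.trans_eq ?_
  congr 1
  have hspos : (0:ℝ) < s / (s - 1) := by
    apply div_pos (by linarith) (by linarith)
  rw [ENNReal.ofReal_rpow_of_pos hspos]
  have hd : α - 1 / p - β ≠ 0 := by
    have : 0 < α - 1/p - β := by linarith
    linarith
  have hsne : s - 1 ≠ 0 := by linarith
  have heq : s / (s - 1) = (α - β) / (α - 1 / p - β) := by
    rw [hs_def]
    rw [div_eq_div_iff (by rw [hs_def] at hsne; exact fun h => hsne (by linarith)) hd]
    field_simp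
    ring
  rw [heq]
end

section
/- Let (M, d_M) be a metric space with finite diameter Δ(M) ∈ (0,∞), let X be a (real) normed space, let α* ∈ (0,1), γ ∈ (0,∞), β ∈ (0, α*/γ), and let w(x) = (1 - β log x)^γ x^{α*} for x ∈ (0,1]. Then for every continuous f : M → X, (e^{-1}βγ)^γ |f|_{C_w} ≤ sup_{α ∈ (0,α*)} (α* - α)^γ Δ(M)^α |f|_{C^α} ≤ (α* + e^{-1}βγ)^γ |f|_{C_w}, where |f|_{C_w} = sup_{x≠y} ‖f(x)-f(y)‖ / w(d_M(x,y)/Δ(M)) and |f|_{C^α} = sup_{x≠y} ‖f(x)-f(y)‖ / d_M(x,y)^α. -/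
open Metric ENNReal

private lemma xexp_le' (x : ℝ) : x * Real.exp (-x) ≤ Real.exp (-1) := by
  have h : x ≤ Real.exp (x - 1) := by
    have := Real.add_one_le_exp (x - 1); linarith
  calc x * Real.exp (-x) ≤ Real.exp (x - 1) * Real.exp (-x) :=
        mul_le_mul_of_nonneg_right h (Real.exp_nonneg _)
    _ = Real.exp (-1) := by rw [← Real.exp_add]; ring_nf

private lemma exp_rpow' (a b : ℝ) : Real.exp a ^ b = Real.exp (a * b) := by
  rw [Real.rpow_def_of_pos (Real.exp_pos a), Real.log_exp]

private lemma core_up' {αs γ β u s : ℝ} (hγ : 0 < γ) (hβ : 0 ≤ β)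
    (hu0 : 0 ≤ u) (huα : u ≤ αs) (hs : 0 ≤ s) :
    u * (1 + β * s) * Real.exp (-(u * s / γ)) ≤ αs + Real.exp (-1) * β * γ := by
  set E := Real.exp (-(u * s / γ)) with hE
  have hE0 : 0 < E := Real.exp_pos _
  have hE1 : E ≤ 1 := by
    rw [hE, ← Real.exp_zero]
    exact Real.exp_le_exp.2 (neg_nonpos.2 (by positivity))
  have hx : u * s / γ * E ≤ Real.exp (-1) := xexp_le' _
  have h2 : u * s * E ≤ Real.exp (-1) * γ := by
    have h3 := mul_le_mul_of_nonneg_right hx hγ.le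
    calc u * s * E = u * s / γ * E * γ := by field_simp
      _ ≤ Real.exp (-1) * γ := h3
  nlinarith [mul_le_mul_of_nonneg_left h2 hβ, mul_le_mul_of_nonneg_right hE1 hu0]

private lemma core_low' {αs γ β s : ℝ} (hγ : 0 < γ) (hβ0 : 0 < β) (hβγ : β * γ < αs)
    (hs : 0 ≤ s) :
    ∃ u, 0 < u ∧ u < αs ∧
      Real.exp (-1) * β * γ ≤ u * (1 + β * s) * Real.exp (-(u * s / γ)) := by
  have hαs : 0 < αs := lt_trans (by positivity) hβγ
  set c : ℝ := (αs + β * γ) / 2 with hc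
  have hc0 : 0 < c := by positivity
  have hcβ : β * γ < c := by rw [hc]; linarith
  have hcα : c < αs := by rw [hc]; linarith
  by_cases hcase : c * s ≤ γ
  · refine ⟨c, hc0, hcα, ?_⟩
    have h1 : Real.exp (-1) ≤ Real.exp (-(c * s / γ)) := by
      apply Real.exp_le_exp.2
      have : c * s / γ ≤ 1 := (div_le_one hγ).2 hcase
      linarith
    have hbs : 0 ≤ β * s := by positivity
    calc Real.exp (-1) * β * γ = β * γ * Real.exp (-1) := by ring
      _ ≤ c * Real.exp (-1) := mul_le_mul_of_nonneg_right hcβ.le (Real.exp_nonneg _)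
      _ ≤ c * Real.exp (-(c * s / γ)) := mul_le_mul_of_nonneg_left h1 hc0.le
      _ ≤ c * (1 + β * s) * Real.exp (-(c * s / γ)) := by
          nlinarith [mul_nonneg (mul_nonneg hc0.le hbs) (Real.exp_pos (-(c * s / γ))).le]
  · push_neg at hcase
    have hs0 : 0 < s := by nlinarith
    refine ⟨γ / s, by positivity, by
      have := (div_lt_iff₀ hs0).2 hcase
      linarith, ?_⟩
    have he : γ / s * s / γ = 1 := by field_simp
    rw [he]
    have h3 : 0 < γ / s := by positivity
    have h4 : β * γ ≤ γ / s * (1 + β * s) := by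
      have h5 : γ / s * (1 + β * s) = γ / s + β * γ := by field_simp
      rw [h5]; linarith
    calc Real.exp (-1) * β * γ = β * γ * Real.exp (-1) := by ring
      _ ≤ γ / s * (1 + β * s) * Real.exp (-1) :=
          mul_le_mul_of_nonneg_right h4 (Real.exp_nonneg _)

private lemma ident' {γ : ℝ} (hγ : 0 < γ) (u b s αs : ℝ) (hu : 0 ≤ u) (hb : 0 ≤ b) :
    u ^ γ * b ^ γ * Real.exp (-s * αs) =
      (u * b * Real.exp (-(u * s / γ))) ^ γ * Real.exp (-s * (αs - u)) := by
  rw [Real.mul_rpow (mul_nonneg hu hb) (Real.exp_nonneg _), Real.mul_rpow hu hb, exp_rpow']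
  have h1 : -(u * s / γ) * γ = -(u * s) := by field_simp
  have h2 : -s * αs = -(u * s) + -s * (αs - u) := by ring
  rw [h1, h2, Real.exp_add]
  ring

private lemma conv₁' {wt tα Δα dα n A B : ℝ} (hwt : 0 < wt) (htα : 0 < tα) (hΔα : 0 < Δα)
    (hdα : dα = tα * Δα) (hn : 0 ≤ n)
    (h : A * wt ≤ B * tα) : A * Δα * (n / dα) ≤ B * (n / wt) := by
  rw [hdα]
  have h1 : A * Δα * (n / (tα * Δα)) = n * (A / tα) := by
    field_simp
  have h2 : B * (n / wt) = n * (B / wt) := by ring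
  rw [h1, h2]
  exact mul_le_mul_of_nonneg_left ((div_le_div_iff₀ htα hwt).2 h) hn

private lemma conv₂' {wt tα Δα dα n A B : ℝ} (hwt : 0 < wt) (htα : 0 < tα) (hΔα : 0 < Δα)
    (hdα : dα = tα * Δα) (hn : 0 ≤ n)
    (h : A * tα ≤ B * wt) : A * (n / wt) ≤ B * Δα * (n / dα) := by
  rw [hdα]
  have h1 : B * Δα * (n / (tα * Δα)) = n * (B / tα) := by
    field_simp
  have h2 : A * (n / wt) = n * (A / wt) := by ring
  rw [h1, h2]
  exact mul_le_mul_of_nonneg_left ((div_le_div_iff₀ hwt htα).2 (by linarith)) hn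

/-- Logarithmic-blowup characterization of the generalized Hölder seminorm for
`w(x) = (1 - β log x)^γ x^{α*}`. -/
theorem stmt_2 {M : Type*} [MetricSpace M] {X : Type*} [NormedAddCommGroup X]
    [NormedSpace ℝ X]
    (hbdd : Bornology.IsBounded (Set.univ : Set M))
    (hΔ : 0 < Metric.diam (Set.univ : Set M))
    (αs γ β : ℝ) (hαs : αs ∈ Set.Ioo (0 : ℝ) 1) (hγ : 0 < γ) (hβ0 : 0 < β)
    (hβ : β < αs / γ)
    (w : ℝ → ℝ) (hw : ∀ x, w x = (1 - β * Real.log x) ^ γ * x ^ αs)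
    (f : M → X) (hf : Continuous f) :
    ENNReal.ofReal ((Real.exp (-1) * β * γ) ^ γ) *
        (⨆ (x : M) (y : M) (_ : x ≠ y),
          ENNReal.ofReal (‖f x - f y‖ / w (dist x y / Metric.diam (Set.univ : Set M)))) ≤
      (⨆ α ∈ Set.Ioo (0 : ℝ) αs,
        ENNReal.ofReal ((αs - α) ^ γ * Metric.diam (Set.univ : Set M) ^ α) *
          ⨆ (x : M) (y : M) (_ : x ≠ y),
            ENNReal.ofReal (‖f x - f y‖ / dist x y ^ α)) ∧
    (⨆ α ∈ Set.Ioo (0 : ℝ) αs,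
        ENNReal.ofReal ((αs - α) ^ γ * Metric.diam (Set.univ : Set M) ^ α) *
          ⨆ (x : M) (y : M) (_ : x ≠ y),
            ENNReal.ofReal (‖f x - f y‖ / dist x y ^ α)) ≤
      ENNReal.ofReal ((αs + Real.exp (-1) * β * γ) ^ γ) *
        (⨆ (x : M) (y : M) (_ : x ≠ y),
          ENNReal.ofReal (‖f x - f y‖ / w (dist x y / Metric.diam (Set.univ : Set M)))) := by
  have hβγ : β * γ < αs := (lt_div_iff₀ hγ).1 hβ
  have hαs0 : 0 < αs := hαs.1
  set Δ : ℝ := Metric.diam (Set.univ : Set M) with hΔdef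
  -- upper pointwise (real) inequality
  have main_up : ∀ (x y : M), x ≠ y → ∀ α : ℝ, α ∈ Set.Ioo (0:ℝ) αs →
      (αs - α) ^ γ * Δ ^ α * (‖f x - f y‖ / dist x y ^ α) ≤
        (αs + Real.exp (-1) * β * γ) ^ γ * (‖f x - f y‖ / w (dist x y / Δ)) := by
    intro x y hxy α hα
    obtain ⟨hα0, hα1⟩ := hα
    have hd0 : 0 < dist x y := dist_pos.2 hxy
    have hdΔ : dist x y ≤ Δ := Metric.dist_le_diam_of_mem hbdd (Set.mem_univ x) (Set.mem_univ y)
    set t := dist x y / Δ with ht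
    have ht0 : 0 < t := div_pos hd0 hΔ
    have ht1 : t ≤ 1 := (div_le_one hΔ).2 hdΔ
    set s := -Real.log t with hsdef
    have hs : 0 ≤ s := neg_nonneg.2 (Real.log_nonpos ht0.le ht1)
    have hts : t = Real.exp (-s) := by rw [hsdef, neg_neg, Real.exp_log ht0]
    have hb : 0 ≤ 1 + β * s := by positivity
    have hb' : 0 < 1 + β * s := by positivity
    have hwt : w t = (1 + β * s) ^ γ * Real.exp (-s * αs) := by
      rw [hw t]
      have h1 : (1 : ℝ) - β * Real.log t = 1 + β * s := by rw [hsdef]; ring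
      rw [h1]
      congr 1
      rw [hts, exp_rpow']
    have hwt0 : 0 < w t := by
      rw [hwt]; exact mul_pos (Real.rpow_pos_of_pos hb' γ) (Real.exp_pos _)
    have htα : t ^ α = Real.exp (-s * α) := by rw [hts, exp_rpow']
    have htα0 : 0 < t ^ α := Real.rpow_pos_of_pos ht0 α
    have hΔα : 0 < Δ ^ α := Real.rpow_pos_of_pos hΔ α
    have hdα : dist x y ^ α = t ^ α * Δ ^ α := by
      have hm : dist x y = t * Δ := by rw [ht]; field_simp
      rw [hm, Real.mul_rpow ht0.le hΔ.le]
    set u := αs - α with hu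
    have hu0 : 0 ≤ u := by rw [hu]; linarith
    have huα : u ≤ αs := by rw [hu]; linarith
    have hid : u ^ γ * w t = (u * (1 + β * s) * Real.exp (-(u * s / γ))) ^ γ * t ^ α := by
      rw [hwt, ← mul_assoc, ident' hγ u (1 + β * s) s αs hu0 hb]
      have h2 : αs - u = α := by rw [hu]; ring
      rw [h2, ← htα]
    have hkey : u ^ γ * w t ≤ (αs + Real.exp (-1) * β * γ) ^ γ * t ^ α := by
      rw [hid]
      refine mul_le_mul_of_nonneg_right
        (Real.rpow_le_rpow (by positivity) (core_up' hγ hβ0.le hu0 huα hs) hγ.le) htα0.le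
    exact conv₁' hwt0 htα0 hΔα hdα (norm_nonneg _) hkey
  -- lower pointwise (real) inequality
  have main_low : ∀ (x y : M), x ≠ y → ∃ α ∈ Set.Ioo (0:ℝ) αs,
      (Real.exp (-1) * β * γ) ^ γ * (‖f x - f y‖ / w (dist x y / Δ)) ≤
        (αs - α) ^ γ * Δ ^ α * (‖f x - f y‖ / dist x y ^ α) := by
    intro x y hxy
    have hd0 : 0 < dist x y := dist_pos.2 hxy
    have hdΔ : dist x y ≤ Δ := Metric.dist_le_diam_of_mem hbdd (Set.mem_univ x) (Set.mem_univ y)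
    set t := dist x y / Δ with ht
    have ht0 : 0 < t := div_pos hd0 hΔ
    have ht1 : t ≤ 1 := (div_le_one hΔ).2 hdΔ
    set s := -Real.log t with hsdef
    have hs : 0 ≤ s := neg_nonneg.2 (Real.log_nonpos ht0.le ht1)
    have hts : t = Real.exp (-s) := by rw [hsdef, neg_neg, Real.exp_log ht0]
    have hb : 0 ≤ 1 + β * s := by positivity
    have hb' : 0 < 1 + β * s := by positivity
    have hwt : w t = (1 + β * s) ^ γ * Real.exp (-s * αs) := by
      rw [hw t]
      have h1 : (1 : ℝ) - β * Real.log t = 1 + β * s := by rw [hsdef]; ring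
      rw [h1]
      congr 1
      rw [hts, exp_rpow']
    have hwt0 : 0 < w t := by
      rw [hwt]; exact mul_pos (Real.rpow_pos_of_pos hb' γ) (Real.exp_pos _)
    obtain ⟨u, hu0, huα, hcore⟩ := core_low' hγ hβ0 hβγ hs
    refine ⟨αs - u, ⟨by linarith, by linarith⟩, ?_⟩
    have h2 : αs - (αs - u) = u := by ring
    rw [h2]
    have htα : t ^ (αs - u) = Real.exp (-s * (αs - u)) := by rw [hts, exp_rpow']
    have htα0 : 0 < t ^ (αs - u) := Real.rpow_pos_of_pos ht0 _
    have hΔα : 0 < Δ ^ (αs - u) := Real.rpow_pos_of_pos hΔ _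
    have hdα : dist x y ^ (αs - u) = t ^ (αs - u) * Δ ^ (αs - u) := by
      have hm : dist x y = t * Δ := by rw [ht]; field_simp
      rw [hm, Real.mul_rpow ht0.le hΔ.le]
    have hid : u ^ γ * w t = (u * (1 + β * s) * Real.exp (-(u * s / γ))) ^ γ * t ^ (αs - u) := by
      rw [hwt, ← mul_assoc, ident' hγ u (1 + β * s) s αs hu0.le hb, ← htα]
    have hkey : (Real.exp (-1) * β * γ) ^ γ * t ^ (αs - u) ≤ u ^ γ * w t := by
      rw [hid]
      exact mul_le_mul_of_nonneg_right
        (Real.rpow_le_rpow (by positivity) hcore hγ.le) htα0.le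
    exact conv₂' hwt0 htα0 hΔα hdα (norm_nonneg _) hkey
  constructor
  · -- lower bound
    simp only [ENNReal.mul_iSup]
    refine iSup_le fun x => iSup_le fun y => iSup_le fun hxy => ?_
    obtain ⟨α, hα, hineq⟩ := main_low x y hxy
    have hcα : (0:ℝ) ≤ (αs - α) ^ γ * Δ ^ α :=
      mul_nonneg (Real.rpow_nonneg (by linarith [hα.2]) _) (Real.rpow_nonneg hΔ.le _)
    refine le_iSup₂_of_le α hα ?_
    calc ENNReal.ofReal ((Real.exp (-1) * β * γ) ^ γ) *
          ENNReal.ofReal (‖f x - f y‖ / w (dist x y / Δ))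
        = ENNReal.ofReal ((Real.exp (-1) * β * γ) ^ γ *
            (‖f x - f y‖ / w (dist x y / Δ))) := (ENNReal.ofReal_mul (by positivity)).symm
      _ ≤ ENNReal.ofReal ((αs - α) ^ γ * Δ ^ α * (‖f x - f y‖ / dist x y ^ α)) :=
          ENNReal.ofReal_le_ofReal hineq
      _ = ENNReal.ofReal ((αs - α) ^ γ * Δ ^ α) *
            ENNReal.ofReal (‖f x - f y‖ / dist x y ^ α) := ENNReal.ofReal_mul hcα
      _ ≤ ⨆ (x : M) (y : M) (_ : x ≠ y),
            ENNReal.ofReal ((αs - α) ^ γ * Δ ^ α) *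
              ENNReal.ofReal (‖f x - f y‖ / dist x y ^ α) :=
          le_iSup_of_le x (le_iSup_of_le y (le_iSup_of_le hxy le_rfl))
  · -- upper bound
    refine iSup₂_le fun α hα => ?_
    have hcα : (0:ℝ) ≤ (αs - α) ^ γ * Δ ^ α :=
      mul_nonneg (Real.rpow_nonneg (by linarith [hα.2]) _) (Real.rpow_nonneg hΔ.le _)
    simp only [ENNReal.mul_iSup]
    refine iSup_le fun x => iSup_le fun y => iSup_le fun hxy => ?_
    calc ENNReal.ofReal ((αs - α) ^ γ * Δ ^ α) *
          ENNReal.ofReal (‖f x - f y‖ / dist x y ^ α)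
        = ENNReal.ofReal ((αs - α) ^ γ * Δ ^ α * (‖f x - f y‖ / dist x y ^ α)) :=
          (ENNReal.ofReal_mul hcα).symm
      _ ≤ ENNReal.ofReal ((αs + Real.exp (-1) * β * γ) ^ γ *
            (‖f x - f y‖ / w (dist x y / Δ))) :=
          ENNReal.ofReal_le_ofReal (main_up x y hxy α hα)
      _ = ENNReal.ofReal ((αs + Real.exp (-1) * β * γ) ^ γ) *
            ENNReal.ofReal (‖f x - f y‖ / w (dist x y / Δ)) :=
          ENNReal.ofReal_mul (by positivity)
      _ ≤ ⨆ (x : M) (y : M) (_ : x ≠ y),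
            ENNReal.ofReal ((αs + Real.exp (-1) * β * γ) ^ γ) *
              ENNReal.ofReal (‖f x - f y‖ / w (dist x y / Δ)) :=
          le_iSup_of_le x (le_iSup_of_le y (le_iSup_of_le hxy le_rfl))
end

section
/- Let w : (0,1] → (0,∞) be an admissible modulus of continuity with growth constants (c_w, d_w), and let γ, β ∈ (0,∞). Define w̃(x) = (1 - β log x)^{-γ} w(x). Then w̃ is an admissible modulus of continuity with growth constants (c_{w̃}, d_{w̃}) satisfying d_w ≤ d_{w̃} ≤ c_{w̃} ≤ (1 + β log 2)^γ c_w. -/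
/-- The set of growth ratios `w(x)/w(x/2)` for `x ∈ (0,1]`. -/
def growthRatios (w : ℝ → ℝ) : Set ℝ :=
  (fun x => w x / w (x / 2)) '' Set.Ioc (0 : ℝ) 1

/-- The lower growth constant `d_w = inf_{x∈(0,1]} w(x)/w(x/2)`. -/
noncomputable def dConst (w : ℝ → ℝ) : ℝ := sInf (growthRatios w)

/-- The upper growth constant `c_w = sup_{x∈(0,1]} w(x)/w(x/2)`. -/
noncomputable def cConst (w : ℝ → ℝ) : ℝ := sSup (growthRatios w)

/-- `w : (0,1] → (0,∞)` is an admissible modulus of continuity: continuous,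
non-decreasing, positive, with growth constants `d_w, c_w ∈ (1,∞)`. -/
def IsAdmissibleModulus (w : ℝ → ℝ) : Prop :=
  ContinuousOn w (Set.Ioc (0 : ℝ) 1) ∧ MonotoneOn w (Set.Ioc (0 : ℝ) 1) ∧
    (∀ x ∈ Set.Ioc (0 : ℝ) 1, 0 < w x) ∧
    BddAbove (growthRatios w) ∧ 1 < dConst w ∧ 1 < cConst w

/-- If `w` is an admissible modulus of continuity and `γ, β > 0`, then
`w̃(x) = (1 - β log x)^{-γ} w(x)` is admissible, with
`d_w ≤ d_{w̃} ≤ c_{w̃} ≤ (1 + β log 2)^γ c_w`. -/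
theorem stmt_4 (w : ℝ → ℝ) (hw : IsAdmissibleModulus w) (γ β : ℝ) (hγ : 0 < γ)
    (hβ : 0 < β) (wt : ℝ → ℝ)
    (hwt : ∀ x, wt x = (1 - β * Real.log x) ^ (-γ) * w x) :
    IsAdmissibleModulus wt ∧ dConst w ≤ dConst wt ∧ dConst wt ≤ cConst wt ∧
      cConst wt ≤ (1 + β * Real.log 2) ^ γ * cConst w := by
  obtain ⟨hc, hm, hpos, hbdd, hd, hcc⟩ := hw
  have hL : 0 < Real.log 2 := Real.log_pos one_lt_two
  set A : ℝ → ℝ := fun x => 1 - β * Real.log x with hAdef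
  have hA1 : ∀ x ∈ Set.Ioc (0:ℝ) 1, 1 ≤ A x := by
    intro x hx
    have hlog : Real.log x ≤ 0 := Real.log_nonpos hx.1.le hx.2
    have : β * Real.log x ≤ 0 := mul_nonpos_of_nonneg_of_nonpos hβ.le hlog
    simp only [hAdef]; linarith
  have hA0 : ∀ x ∈ Set.Ioc (0:ℝ) 1, 0 < A x := fun x hx =>
    lt_of_lt_of_le one_pos (hA1 x hx)
  have hhalf : ∀ x ∈ Set.Ioc (0:ℝ) 1, x / 2 ∈ Set.Ioc (0:ℝ) 1 := by
    intro x hx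
    exact ⟨by linarith [hx.1], by linarith [hx.2]⟩
  have hB : ∀ x ∈ Set.Ioc (0:ℝ) 1, A (x / 2) = A x + β * Real.log 2 := by
    intro x hx
    simp only [hAdef]
    rw [Real.log_div hx.1.ne' two_ne_zero]
    ring
  have hρbound : 0 < 1 + β * Real.log 2 := by positivity
  -- pointwise ratio formula and bounds
  have key : ∀ x ∈ Set.Ioc (0:ℝ) 1, ∃ ρ : ℝ, 1 < ρ ∧ ρ ≤ (1 + β * Real.log 2) ^ γ ∧
      wt x / wt (x / 2) = ρ * (w x / w (x / 2)) := by
    intro x hx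
    have hx2 := hhalf x hx
    have hAx := hA0 x hx
    have hAx2 := hA0 _ hx2
    have hBx := hB x hx
    refine ⟨(A (x/2) / A x) ^ γ, ?_, ?_, ?_⟩
    · rw [Real.one_lt_rpow_iff_of_pos (by positivity)]
      left
      refine ⟨(one_lt_div hAx).mpr ?_, hγ⟩
      rw [hBx]; nlinarith
    · have h1 : A (x/2) / A x ≤ 1 + β * Real.log 2 := by
        rw [div_le_iff₀ hAx, hBx]
        have h := hA1 x hx
        nlinarith [mul_nonneg (mul_pos hβ hL).le (by linarith : (0:ℝ) ≤ A x - 1)]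
      exact Real.rpow_le_rpow (by positivity) h1 hγ.le
    · rw [hwt x, hwt (x/2), mul_div_mul_comm]
      congr 1
      rw [Real.div_rpow hAx2.le hAx.le, Real.rpow_neg hAx.le, Real.rpow_neg hAx2.le,
        inv_div_inv]
  -- nonemptiness
  have hne : (growthRatios w).Nonempty := ⟨_, ⟨1, Set.mem_Ioc.mpr ⟨one_pos, le_refl 1⟩, rfl⟩⟩
  have hnewt : (growthRatios wt).Nonempty := ⟨_, ⟨1, Set.mem_Ioc.mpr ⟨one_pos, le_refl 1⟩, rfl⟩⟩
  have hrpos : ∀ x ∈ Set.Ioc (0:ℝ) 1, 0 < w x / w (x / 2) := by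
    intro x hx
    exact div_pos (hpos x hx) (hpos _ (hhalf x hx))
  have hbelow : BddBelow (growthRatios w) := by
    refine ⟨0, fun a ha => ?_⟩
    obtain ⟨x, hx, rfl⟩ := ha
    exact (hrpos x hx).le
  -- lower bound for elements of growthRatios wt
  have hlower : ∀ a ∈ growthRatios wt, dConst w ≤ a := by
    rintro a ⟨x, hx, rfl⟩
    obtain ⟨ρ, hρ1, _, heq⟩ := key x hx
    have hr : dConst w ≤ w x / w (x / 2) := csInf_le hbelow ⟨x, hx, rfl⟩
    have : w x / w (x / 2) ≤ ρ * (w x / w (x / 2)) := by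
      nlinarith [hrpos x hx]
    simp only []
    rw [heq]
    linarith
  -- upper bound for elements of growthRatios wt
  have hupper : ∀ a ∈ growthRatios wt, a ≤ (1 + β * Real.log 2) ^ γ * cConst w := by
    rintro a ⟨x, hx, rfl⟩
    obtain ⟨ρ, hρ1, hρ2, heq⟩ := key x hx
    have hr : w x / w (x / 2) ≤ cConst w := le_csSup hbdd ⟨x, hx, rfl⟩
    have hρ0 : 0 ≤ ρ := by linarith
    simp only []
    rw [heq]
    calc ρ * (w x / w (x / 2)) ≤ (1 + β * Real.log 2) ^ γ * (w x / w (x / 2)) :=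
          mul_le_mul_of_nonneg_right hρ2 (hrpos x hx).le
      _ ≤ (1 + β * Real.log 2) ^ γ * cConst w :=
          mul_le_mul_of_nonneg_left hr (by positivity)
  have hbddwt : BddAbove (growthRatios wt) := ⟨_, hupper⟩
  have hbelowwt : BddBelow (growthRatios wt) := ⟨dConst w, hlower⟩
  have hdle : dConst w ≤ dConst wt := le_csInf hnewt hlower
  have hdc : dConst wt ≤ cConst wt := csInf_le_csSup hnewt hbelowwt hbddwt
  have hcle : cConst wt ≤ (1 + β * Real.log 2) ^ γ * cConst w := csSup_le hnewt hupper
  -- continuity of wt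
  have hwteq : wt = fun x => A x ^ (-γ) * w x := funext hwt
  have hcontA : ContinuousOn A (Set.Ioc (0:ℝ) 1) := by
    apply continuousOn_const.sub
    apply continuousOn_const.mul
    exact Real.continuousOn_log.mono (fun x hx => by simp [ne_of_gt hx.1])
  have hcont : ContinuousOn wt (Set.Ioc (0:ℝ) 1) := by
    rw [hwteq]
    exact (hcontA.rpow_const fun x hx => Or.inl (hA0 x hx).ne').mul hc
  -- monotonicity of wt
  have hmono : MonotoneOn wt (Set.Ioc (0:ℝ) 1) := by
    intro x hx y hy hxy
    rw [hwt x, hwt y]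
    have hAyx : A y ≤ A x := by
      simp only [hAdef]
      have := Real.log_le_log hx.1 hxy
      nlinarith
    have h1 : A x ^ (-γ) ≤ A y ^ (-γ) :=
      Real.rpow_le_rpow_of_nonpos (hA0 y hy) hAyx (by linarith)
    exact mul_le_mul h1 (hm hx hy hxy) (hpos x hx).le
      (Real.rpow_pos_of_pos (hA0 y hy) _).le
  have hposwt : ∀ x ∈ Set.Ioc (0:ℝ) 1, 0 < wt x := by
    intro x hx
    rw [hwt x]
    have := hA0 x hx
    have := hpos x hx
    positivity
  exact ⟨⟨hcont, hmono, hposwt, hbddwt, lt_of_lt_of_le hd hdle,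
    lt_of_lt_of_le (lt_of_lt_of_le hd hdle) hdc⟩, hdle, hdc, hcle⟩
end

section
/- Let α ∈ (0,1], γ ∈ (0,∞), β ∈ (0, α/γ). Then the function w : (0,1] → (0,∞) given by w(x) = (1 - β log x)^γ x^α is an admissible modulus of continuity, with growth constants (c_w, d_w) satisfying (1 + β log 2)^{-γ} 2^α ≤ d_w ≤ c_w ≤ 2^α. -/
/-- For `α ∈ (0,1]`, `γ > 0`, `β ∈ (0, α/γ)`, the function
`w(x) = (1 - β log x)^γ x^α` is an admissible modulus of continuity with
`(1 + β log 2)^{-γ} 2^α ≤ d_w ≤ c_w ≤ 2^α`. -/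
theorem stmt_6 (α γ β : ℝ) (hα : α ∈ Set.Ioc (0 : ℝ) 1) (hγ : 0 < γ)
    (hβ0 : 0 < β) (hβ : β < α / γ) (w : ℝ → ℝ)
    (hw : ∀ x, w x = (1 - β * Real.log x) ^ γ * x ^ α) :
    IsAdmissibleModulus w ∧ (1 + β * Real.log 2) ^ (-γ) * 2 ^ α ≤ dConst w ∧
      dConst w ≤ cConst w ∧ cConst w ≤ 2 ^ α := by
  obtain ⟨hα0, hα1⟩ := hα
  have hβγ : β * γ < α := (lt_div_iff₀ hγ).mp hβ
  set b : ℝ := β * Real.log 2 with hbdef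
  have hb : 0 < b := mul_pos hβ0 (Real.log_pos one_lt_two)
  -- For x ∈ (0,1], A x := 1 - β log x ≥ 1
  have hA1 : ∀ x ∈ Set.Ioc (0:ℝ) 1, 1 ≤ 1 - β * Real.log x := by
    intro x hx
    have : Real.log x ≤ 0 := Real.log_nonpos hx.1.le hx.2
    nlinarith
  have hA0 : ∀ x ∈ Set.Ioc (0:ℝ) 1, 0 < 1 - β * Real.log x := fun x hx =>
    lt_of_lt_of_le one_pos (hA1 x hx)
  -- positivity of w
  have hwpos : ∀ x ∈ Set.Ioc (0:ℝ) 1, 0 < w x := by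
    intro x hx
    rw [hw]
    exact mul_pos (Real.rpow_pos_of_pos (hA0 x hx) _) (Real.rpow_pos_of_pos hx.1 _)
  -- the ratio formula
  have hratio : ∀ x ∈ Set.Ioc (0:ℝ) 1,
      w x / w (x / 2) =
        ((1 - β * Real.log x) / (1 - β * Real.log x + b)) ^ γ * 2 ^ α := by
    intro x hx
    have hx0 : (0:ℝ) < x := hx.1
    have hAx := hA0 x hx
    have hAb : 0 < 1 - β * Real.log x + b := by linarith
    rw [hw, hw, Real.log_div hx0.ne' two_ne_zero]
    have h1 : 1 - β * (Real.log x - Real.log 2) = 1 - β * Real.log x + b := by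
      rw [hbdef]; ring
    rw [h1, Real.div_rpow hx0.le (by norm_num : (0:ℝ) ≤ 2),
      Real.div_rpow hAx.le hAb.le]
    have h2 : (0:ℝ) < x ^ α := Real.rpow_pos_of_pos hx0 _
    have h3 : (0:ℝ) < (1 - β * Real.log x + b) ^ γ := Real.rpow_pos_of_pos hAb _
    have h4 : (0:ℝ) < (2:ℝ) ^ α := Real.rpow_pos_of_pos two_pos _
    field_simp
  -- bounds for the ratio
  have hub : ∀ r ∈ growthRatios w, r ≤ 2 ^ α := by
    rintro r ⟨x, hx, rfl⟩
    show w x / w (x / 2) ≤ _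
    rw [hratio x hx]
    have hAx := hA0 x hx
    have hAb : 0 < 1 - β * Real.log x + b := by linarith
    have h1 : ((1 - β * Real.log x) / (1 - β * Real.log x + b)) ^ γ ≤ 1 := by
      apply Real.rpow_le_one (by positivity)
      · exact div_le_one_of_le₀ (by linarith) hAb.le
      · exact hγ.le
    calc ((1 - β * Real.log x) / (1 - β * Real.log x + b)) ^ γ * 2 ^ α
        ≤ 1 * 2 ^ α := by
          apply mul_le_mul_of_nonneg_right h1 (Real.rpow_pos_of_pos two_pos _).le
      _ = 2 ^ α := one_mul _
  have hlb : ∀ r ∈ growthRatios w, (1 + b) ^ (-γ) * 2 ^ α ≤ r := by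
    rintro r ⟨x, hx, rfl⟩
    show _ ≤ w x / w (x / 2)
    rw [hratio x hx]
    have hAx1 := hA1 x hx
    have hAb : 0 < 1 - β * Real.log x + b := by linarith
    have h1b : (0:ℝ) < 1 + b := by linarith
    have key : (1:ℝ) / (1 + b) ≤ (1 - β * Real.log x) / (1 - β * Real.log x + b) := by
      rw [div_le_div_iff₀ h1b hAb]
      nlinarith
    have h1 : (1 + b) ^ (-γ) ≤ ((1 - β * Real.log x) / (1 - β * Real.log x + b)) ^ γ := by
      rw [Real.rpow_neg h1b.le, ← Real.inv_rpow h1b.le]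
      refine Real.rpow_le_rpow (by positivity) ?_ hγ.le
      rw [inv_eq_one_div]; exact key
    exact mul_le_mul_of_nonneg_right h1 (Real.rpow_pos_of_pos two_pos _).le
  have hne : (growthRatios w).Nonempty := ⟨w 1 / w (1/2), 1, by norm_num⟩
  have hbdd : BddAbove (growthRatios w) := ⟨2 ^ α, hub⟩
  have hbddb : BddBelow (growthRatios w) := ⟨(1 + b) ^ (-γ) * 2 ^ α, hlb⟩
  -- the lower bound constant exceeds 1
  have hL1 : 1 < (1 + b) ^ (-γ) * 2 ^ α := by
    have h1b : (0:ℝ) < 1 + b := by linarith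
    have h1 : (1 + b : ℝ) ^ γ < 2 ^ α := by
      have e1 : (1 + b : ℝ) ≤ Real.exp b := by
        have := Real.add_one_le_exp b; linarith
      have e2 : (1 + b : ℝ) ^ γ ≤ Real.exp b ^ γ :=
        Real.rpow_le_rpow h1b.le e1 hγ.le
      have e3 : Real.exp b ^ γ = (2:ℝ) ^ (β * γ) := by
        rw [← Real.exp_mul, Real.rpow_def_of_pos two_pos, hbdef]
        ring_nf
      have e4 : (2:ℝ) ^ (β * γ) < 2 ^ α :=
        Real.rpow_lt_rpow_of_exponent_lt one_lt_two hβγ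
      calc (1 + b : ℝ) ^ γ ≤ Real.exp b ^ γ := e2
        _ = (2:ℝ) ^ (β * γ) := e3
        _ < 2 ^ α := e4
    rw [Real.rpow_neg h1b.le]
    rw [inv_mul_eq_div, lt_div_iff₀ (Real.rpow_pos_of_pos h1b γ)]
    linarith
  -- inf and sup bounds
  have hdge : (1 + b) ^ (-γ) * 2 ^ α ≤ dConst w := le_csInf hne hlb
  have hcle : cConst w ≤ 2 ^ α := csSup_le hne hub
  have hdc : dConst w ≤ cConst w := csInf_le_csSup hne hbddb hbdd
  have hd1 : 1 < dConst w := lt_of_lt_of_le hL1 hdge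
  -- continuity
  have hcont : ContinuousOn w (Set.Ioc (0:ℝ) 1) := by
    have : ContinuousOn (fun x => (1 - β * Real.log x) ^ γ * x ^ α) (Set.Ioc (0:ℝ) 1) := by
      apply ContinuousOn.mul
      · apply ContinuousOn.rpow_const
        · exact continuousOn_const.sub (continuousOn_const.mul
            (Real.continuousOn_log.mono (fun x hx => hx.1.ne')))
        · exact fun x hx => Or.inr hγ.le
      · exact fun x hx => (Real.continuousAt_rpow_const x α (Or.inl hx.1.ne')).continuousWithinAt
    exact this.congr (fun x _ => hw x)
  -- monotonicity via derivative
  have hmono : MonotoneOn w (Set.Ioc (0:ℝ) 1) := by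
    have hweq : w = fun x => (1 - β * Real.log x) ^ γ * x ^ α := funext hw
    have hderiv : ∀ x ∈ interior (Set.Ioc (0:ℝ) 1), 0 < deriv w x := by
      rw [interior_Ioc]
      intro x hx
      obtain ⟨hx0, hx1⟩ := hx
      have hxIoc : x ∈ Set.Ioc (0:ℝ) 1 := ⟨hx0, hx1.le⟩
      set A := 1 - β * Real.log x with hAdef
      have hAx : 0 < A := hA0 x hxIoc
      have hAx1 : 1 ≤ A := hA1 x hxIoc
      have d1 : HasDerivAt (fun y => 1 - β * Real.log y) (-(β * x⁻¹)) x :=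
        ((Real.hasDerivAt_log hx0.ne').const_mul β).const_sub 1
      have d2 : HasDerivAt (fun y => (1 - β * Real.log y) ^ γ)
          (-(β * x⁻¹) * γ * A ^ (γ - 1)) x := d1.rpow_const (Or.inl hAx.ne')
      have d3 : HasDerivAt (fun y : ℝ => y ^ α) (α * x ^ (α - 1)) x :=
        Real.hasDerivAt_rpow_const (Or.inl hx0.ne')
      have d4 : HasDerivAt w
          (-(β * x⁻¹) * γ * A ^ (γ - 1) * x ^ α + A ^ γ * (α * x ^ (α - 1))) x := by
        rw [hweq]; exact d2.mul d3
      rw [d4.deriv]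
      have hxa : x ^ α = x ^ (α - 1) * x := by
        rw [← Real.rpow_add_one hx0.ne']; ring_nf
      have hAg : A ^ γ = A ^ (γ - 1) * A := by
        rw [← Real.rpow_add_one hAx.ne']; ring_nf
      have hsum : -(β * x⁻¹) * γ * A ^ (γ - 1) * x ^ α + A ^ γ * (α * x ^ (α - 1))
          = A ^ (γ - 1) * x ^ (α - 1) * (α * A - β * γ) := by
        rw [hxa, hAg]; field_simp; ring
      rw [hsum]
      have h1 : 0 < α * A - β * γ := by nlinarith
      positivity
    intro x hxm y hym hxy
    rcases hxy.eq_or_lt with rfl | hlt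
    · exact le_rfl
    · exact (strictMonoOn_of_deriv_pos (convex_Ioc 0 1) hcont hderiv hxm hym hlt).le
  refine ⟨⟨hcont, hmono, hwpos, hbdd, hd1, lt_of_lt_of_le hd1 hdc⟩, hdge, hdc, hcle⟩
end

section
/- Let (M, d_M) be a metric space with Minkowski dimension d ∈ (0,∞), covering constant c, and doubling number n₂. Then there exists a nested sequence (V_n)_{n∈ℕ₀} of subsets of M such that for all n: (1) V_n ⊆ V_{n+1}; (2) card(V_n) ≤ c·3^d·2^{dn}; (3) every x ∈ M satisfies d_M(x, V_n) ≤ Δ(M)·2^{-n}; (4) the number of unordered pairs {x,y} ⊆ V_n with 0 < d_M(x,y) < 3·2^{-n}Δ(M) is at most c·3^d·n₂⁴·2^{dn}. -/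
open Metric

/-- `η`-separated finite set. -/
def SepSet {M : Type*} [MetricSpace M] (η : ℝ) (S : Finset M) : Prop :=
  ∀ x ∈ S, ∀ y ∈ S, x ≠ y → η ≤ dist x y

section Aux
variable {M : Type*} [MetricSpace M]

lemma sepSet_card_le {c d Δ : ℝ}
    (hcov : ∀ η ∈ Set.Ioc (0 : ℝ) Δ,
      ∃ F : Finset M, (F.card : ℝ) ≤ c * (Δ / η) ^ d ∧ ∀ x : M, ∃ y ∈ F, dist x y < η)
    {η : ℝ} (hη : 0 < η) (hηΔ : η ≤ Δ) {S : Finset M} (hS : SepSet η S) :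
    (S.card : ℝ) ≤ c * (2 * Δ / η) ^ d := by
  obtain ⟨F, hF, hFc⟩ := hcov (η / 2) ⟨by linarith, by linarith⟩
  choose f hf hfd using hFc
  have hinj : Set.InjOn f S := by
    intro a ha b hb hab
    by_contra hne
    have h1 := hfd a
    have h2 := hfd b
    have h3 := hS a ha b hb hne
    have : dist a b ≤ dist a (f a) + dist (f b) b := by
      rw [hab]; exact (dist_triangle a (f b) b)
    rw [dist_comm (f b) b] at this
    linarith
  have hcard : S.card ≤ F.card :=
    Finset.card_le_card_of_injOn f (fun a _ => hf a) hinj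
  have heq : Δ / (η / 2) = 2 * Δ / η := by
    field_simp
  calc (S.card : ℝ) ≤ F.card := by exact_mod_cast hcard
    _ ≤ c * (Δ / (η / 2)) ^ d := hF
    _ = c * (2 * Δ / η) ^ d := by rw [heq]

lemma exists_maximal_sep {c d Δ : ℝ}
    (hcov : ∀ η ∈ Set.Ioc (0 : ℝ) Δ,
      ∃ F : Finset M, (F.card : ℝ) ≤ c * (Δ / η) ^ d ∧ ∀ x : M, ∃ y ∈ F, dist x y < η)
    {η : ℝ} (hη : 0 < η) (hηΔ : η ≤ Δ) (W : Finset M) (hW : SepSet η W) :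
    ∃ S : Finset M, W ⊆ S ∧ SepSet η S ∧ (∀ x : M, ∃ y ∈ S, dist x y < η) ∧
      (S.card : ℝ) ≤ c * (2 * Δ / η) ^ d := by
  classical
  set N : ℕ := ⌈c * (2 * Δ / η) ^ d⌉₊ with hN
  have hb : ∀ S : Finset M, SepSet η S → S.card ≤ N := by
    intro S hS
    have h1 := sepSet_card_le hcov hη hηΔ hS
    have h2 : (S.card : ℝ) ≤ (N : ℝ) := h1.trans (Nat.le_ceil _)
    exact_mod_cast h2
  set A : Set ℕ := {k | ∃ S : Finset M, W ⊆ S ∧ SepSet η S ∧ S.card = k} with hA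
  have hAne : W.card ∈ A := ⟨W, Finset.Subset.refl W, hW, rfl⟩
  have hAbdd : BddAbove A := ⟨N, fun k hk => by
    obtain ⟨S, _, hsep, hcard⟩ := hk
    exact hcard ▸ hb S hsep⟩
  obtain ⟨S, hWS, hSsep, hScard⟩ := Nat.sSup_mem ⟨_, hAne⟩ hAbdd
  refine ⟨S, hWS, hSsep, ?_, sepSet_card_le hcov hη hηΔ hSsep⟩
  intro x
  by_contra h
  push_neg at h
  have hxS : x ∉ S := by
    intro hx
    have := h x hx
    simp [dist_self] at this
    linarith
  have hins : SepSet η (insert x S) := by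
    intro a ha b hb hne
    have ha' := Finset.mem_insert.mp ha
    have hb' := Finset.mem_insert.mp hb
    rcases ha' with ha1 | ha2
    · rcases hb' with hb1 | hb2
      · exact absurd (ha1.trans hb1.symm) hne
      · subst ha1; exact h b hb2
    · rcases hb' with hb1 | hb2
      · subst hb1; rw [dist_comm]; exact h a ha2
      · exact hSsep a ha2 b hb2 hne
  have hmem : S.card + 1 ∈ A := by
    refine ⟨insert x S, hWS.trans (Finset.subset_insert x S), hins, ?_⟩
    rw [Finset.card_insert_of_notMem hxS]
  have := le_csSup hAbdd hmem
  omega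

lemma doubling_iter {n₂ : ℕ}
    (hdouble : ∀ (x : M) (r : ℝ), ∃ F : Finset M, F.card ≤ n₂ ∧
      Metric.ball x r ⊆ ⋃ y ∈ F, Metric.ball y (r / 2)) :
    ∀ (k : ℕ) (x : M) (r : ℝ), ∃ F : Finset M, F.card ≤ n₂ ^ k ∧
      Metric.ball x r ⊆ ⋃ y ∈ F, Metric.ball y (r / 2 ^ k) := by
  classical
  intro k
  induction k with
  | zero =>
    intro x r
    refine ⟨{x}, by simp, ?_⟩
    simp
  | succ k ih =>
    intro x r
    obtain ⟨F, hFc, hFcov⟩ := ih x r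
    have hG : ∀ y : M, ∃ G : Finset M, G.card ≤ n₂ ∧
        Metric.ball y (r / 2 ^ k) ⊆ ⋃ z ∈ G, Metric.ball z (r / 2 ^ k / 2) :=
      fun y => hdouble y (r / 2 ^ k)
    choose G hGc hGcov using hG
    refine ⟨F.biUnion G, ?_, ?_⟩
    · calc (F.biUnion G).card ≤ ∑ y ∈ F, (G y).card := Finset.card_biUnion_le
        _ ≤ ∑ _y ∈ F, n₂ := Finset.sum_le_sum (fun y _ => hGc y)
        _ = F.card * n₂ := by rw [Finset.sum_const]; ring
        _ ≤ n₂ ^ k * n₂ := Nat.mul_le_mul_right _ hFc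
        _ = n₂ ^ (k + 1) := by ring
    · intro p hp
      obtain ⟨y, hyF, hy⟩ := Set.mem_iUnion₂.mp (hFcov hp)
      obtain ⟨z, hzG, hz⟩ := Set.mem_iUnion₂.mp (hGcov y hy)
      refine Set.mem_iUnion₂.mpr ⟨z, Finset.mem_biUnion.mpr ⟨y, hyF, hzG⟩, ?_⟩
      have : r / 2 ^ k / 2 = r / 2 ^ (k + 1) := by ring
      rwa [this] at hz

lemma neighbor_card_le {n₂ : ℕ}
    (hdouble : ∀ (x : M) (r : ℝ), ∃ F : Finset M, F.card ≤ n₂ ∧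
      Metric.ball x r ⊆ ⋃ y ∈ F, Metric.ball y (r / 2))
    {η : ℝ} (hη : 0 < η) {S : Finset M} (hS : SepSet η S) (x : M) :
    (S.filter fun y => dist x y < 3 * η).card ≤ n₂ ^ 3 := by
  classical
  obtain ⟨F, hFc, hFcov⟩ := doubling_iter hdouble 3 x (4 * η)
  have hr : (4 : ℝ) * η / 2 ^ 3 = η / 2 := by ring
  rw [hr] at hFcov
  have hmem : ∀ y : M, ∃ z : M, (dist y x < 4 * η) → z ∈ F ∧ dist y z < η / 2 := by
    intro y
    by_cases hy : dist y x < 4 * η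
    · obtain ⟨z, hzF, hz⟩ := Set.mem_iUnion₂.mp (hFcov (mem_ball.mpr hy))
      exact ⟨z, fun _ => ⟨hzF, mem_ball.mp hz⟩⟩
    · exact ⟨x, fun h => absurd h hy⟩
  choose g hg using hmem
  have hinj : Set.InjOn g (S.filter fun y => dist x y < 3 * η) := by
    intro a ha b hb hab
    simp only [Finset.coe_filter, Set.mem_setOf_eq] at ha hb
    have hax : dist a x < 4 * η := by rw [dist_comm]; linarith [ha.2]
    have hbx : dist b x < 4 * η := by rw [dist_comm]; linarith [hb.2]
    obtain ⟨_, ha2⟩ := hg a hax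
    obtain ⟨_, hb2⟩ := hg b hbx
    by_contra hne
    have h3 := hS a ha.1 b hb.1 hne
    have : dist a b ≤ dist a (g a) + dist (g b) b := by
      rw [hab]; exact dist_triangle a (g b) b
    rw [dist_comm (g b) b] at this
    linarith
  have : (S.filter fun y => dist x y < 3 * η).card ≤ F.card := by
    refine Finset.card_le_card_of_injOn g ?_ hinj
    intro a ha
    simp only [Finset.coe_filter, Finset.mem_coe, Finset.mem_filter, Set.mem_setOf_eq] at ha
    have hax : dist a x < 4 * η := by rw [dist_comm]; linarith [ha.2]
    exact (hg a hax).1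
  omega

end Aux

/-- Chaining construction: if `(M,d_M)` has Minkowski dimension `d` with covering
constant `c` and doubling number `n₂`, there is a nested sequence `(V_n)` of finite
subsets with `card(V_n) ≤ c·3^d·2^{dn}`, `d(x, V_n) ≤ Δ(M)·2^{-n}` for all `x`, and
at most `c·3^d·n₂⁴·2^{dn}` unordered pairs of distinct points of `V_n` at distance
`< 3·2^{-n}·Δ(M)`. -/
theorem stmt_19 {M : Type*} [MetricSpace M] [Nonempty M]
    (hbdd : Bornology.IsBounded (Set.univ : Set M))
    (hΔ : 0 < Metric.diam (Set.univ : Set M))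
    (d c : ℝ) (hd : 0 < d) (hc : 1 ≤ c)
    (hcov : ∀ η ∈ Set.Ioc (0 : ℝ) (Metric.diam (Set.univ : Set M)),
      ∃ F : Finset M, (F.card : ℝ) ≤ c * (Metric.diam (Set.univ : Set M) / η) ^ d ∧
        ∀ x : M, ∃ y ∈ F, dist x y < η)
    (n₂ : ℕ)
    (hdouble : ∀ (x : M) (r : ℝ), ∃ F : Finset M, F.card ≤ n₂ ∧
      Metric.ball x r ⊆ ⋃ y ∈ F, Metric.ball y (r / 2)) :
    ∃ V : ℕ → Finset M,
      (∀ n, V n ⊆ V (n + 1)) ∧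
      (∀ n, ((V n).card : ℝ) ≤ c * 3 ^ d * 2 ^ (d * n)) ∧
      (∀ n, ∀ x : M, Metric.infDist x (V n : Set M) ≤
        Metric.diam (Set.univ : Set M) * 2 ^ (-(n : ℝ))) ∧
      (∀ n, (Set.ncard {q : Sym2 M | ∃ x ∈ V n, ∃ y ∈ V n, q = s(x, y) ∧
          0 < dist x y ∧
          dist x y < 3 * 2 ^ (-(n : ℝ)) * Metric.diam (Set.univ : Set M)} : ℝ) ≤
        c * 3 ^ d * n₂ ^ 4 * 2 ^ (d * n)) := by
  classical
  set Δ : ℝ := Metric.diam (Set.univ : Set M) with hΔdef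
  set η : ℕ → ℝ := fun n => Δ * 2 ^ (-(n : ℝ)) with hηdef
  have h2pos : ∀ r : ℝ, (0:ℝ) < 2 ^ r := fun r => Real.rpow_pos_of_pos (by norm_num) r
  have hηpos : ∀ n, 0 < η n := fun n => mul_pos hΔ (h2pos _)
  have hηle : ∀ n, η n ≤ Δ := by
    intro n
    have h1 : (2:ℝ) ^ (-(n:ℝ)) ≤ 1 :=
      Real.rpow_le_one_of_one_le_of_nonpos (by norm_num)
        (neg_nonpos.mpr (Nat.cast_nonneg n))
    calc η n ≤ Δ * 1 := mul_le_mul_of_nonneg_left h1 hΔ.le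
      _ = Δ := mul_one Δ
  have hηanti : ∀ n, η (n + 1) ≤ η n := by
    intro n
    have h0 : (2:ℝ) ^ (-(((n:ℕ) + 1 : ℕ) : ℝ)) ≤ 2 ^ (-(n:ℝ)) := by
      apply (Real.rpow_le_rpow_left_iff (x := 2) (by norm_num)).mpr
      push_cast
      linarith
    exact mul_le_mul_of_nonneg_left h0 hΔ.le
  -- choice-friendly step
  have hstep' : ∀ p : ℕ × Finset M, ∃ S : Finset M, SepSet (η p.1) p.2 →
      (p.2 ⊆ S ∧ SepSet (η p.1) S ∧ (∀ x : M, ∃ y ∈ S, dist x y < η p.1) ∧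
        (S.card : ℝ) ≤ c * (2 * Δ / η p.1) ^ d) := by
    intro p
    by_cases h : SepSet (η p.1) p.2
    · obtain ⟨S, h1, h2, h3, h4⟩ := exists_maximal_sep hcov (hηpos p.1) (hηle p.1) p.2 h
      exact ⟨S, fun _ => ⟨h1, h2, h3, h4⟩⟩
    · exact ⟨∅, fun hh => absurd hh h⟩
  choose step hstep using hstep'
  set V : ℕ → Finset M := fun n => Nat.rec (step (0, ∅)) (fun k Vk => step (k + 1, Vk)) n
    with hVdef
  have hemp : SepSet (η 0) (∅ : Finset M) := by
    intro x hx; exact absurd hx (Finset.notMem_empty x)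
  have hVsep : ∀ n, SepSet (η n) (V n) := by
    intro n
    induction n with
    | zero => exact (hstep (0, ∅) hemp).2.1
    | succ k ih =>
      have hw : SepSet (η (k + 1)) (V k) :=
        fun a ha b hb hne => le_trans (hηanti k) (ih a ha b hb hne)
      exact (hstep (k + 1, V k) hw).2.1
  have hVstep : ∀ n, V n ⊆ V (n + 1) ∧ (∀ x : M, ∃ y ∈ V (n + 1), dist x y < η (n + 1)) ∧
      ((V (n + 1)).card : ℝ) ≤ c * (2 * Δ / η (n + 1)) ^ d := by
    intro n
    have hw : SepSet (η (n + 1)) (V n) :=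
      fun a ha b hb hne => le_trans (hηanti n) (hVsep n a ha b hb hne)
    obtain ⟨h1, _, h3, h4⟩ := hstep (n + 1, V n) hw
    exact ⟨h1, h3, h4⟩
  have hVcov : ∀ n, ∀ x : M, ∃ y ∈ V n, dist x y < η n := by
    intro n
    cases n with
    | zero => exact (hstep (0, ∅) hemp).2.2.1
    | succ k => exact (hVstep k).2.1
  have hVcard : ∀ n, ((V n).card : ℝ) ≤ c * (2 * Δ / η n) ^ d := by
    intro n
    cases n with
    | zero => exact (hstep (0, ∅) hemp).2.2.2
    | succ k => exact (hVstep k).2.2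
  -- numeric computation of the cardinality bound
  have hratio : ∀ n : ℕ, 2 * Δ / η n = (2:ℝ) ^ ((n : ℝ) + 1) := by
    intro n
    have h1 : (2:ℝ) ^ ((n:ℝ) + 1) = 2 ^ (n:ℝ) * 2 := by
      rw [Real.rpow_add (by norm_num), Real.rpow_one]
    have h2 : (2:ℝ) ^ (-(n:ℝ)) = ((2:ℝ) ^ (n:ℝ))⁻¹ := by
      rw [Real.rpow_neg (by norm_num)]
    have h2n : (0:ℝ) < 2 ^ (n:ℝ) := h2pos _
    rw [h1, hηdef]
    simp only [h2]
    field_simp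
  have hcard2 : ∀ n : ℕ, ((V n).card : ℝ) ≤ c * 2 ^ d * 2 ^ (d * (n:ℝ)) := by
    intro n
    have h := hVcard n
    rw [hratio n] at h
    have heq : ((2:ℝ) ^ ((n:ℝ) + 1)) ^ d = 2 ^ d * 2 ^ (d * (n:ℝ)) := by
      rw [← Real.rpow_mul (by norm_num : (0:ℝ) ≤ 2)]
      rw [show ((n:ℝ) + 1) * d = d + d * (n:ℝ) by ring]
      rw [Real.rpow_add (by norm_num)]
    rw [heq, ← mul_assoc] at h
    exact h
  have h23 : (2:ℝ) ^ d ≤ 3 ^ d :=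
    Real.rpow_le_rpow (by norm_num) (by norm_num) hd.le
  have hn₂ : 1 ≤ n₂ := by
    obtain ⟨x⟩ := ‹Nonempty M›
    obtain ⟨F, hFc, hFcov⟩ := hdouble x 1
    obtain ⟨y, hy, _⟩ := Set.mem_iUnion₂.mp (hFcov (mem_ball_self one_pos))
    have : 0 < F.card := Finset.card_pos.mpr ⟨y, hy⟩
    omega
  refine ⟨V, fun n => (hVstep n).1, ?_, ?_, ?_⟩
  · -- cardinality bound
    intro n
    refine (hcard2 n).trans ?_
    have h2dn : (0:ℝ) ≤ 2 ^ (d * (n:ℝ)) := (h2pos _).le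
    have hc0 : (0:ℝ) ≤ c := by linarith
    have := mul_le_mul_of_nonneg_left h23 hc0
    exact mul_le_mul_of_nonneg_right this h2dn
  · -- covering bound
    intro n x
    obtain ⟨y, hy, hlt⟩ := hVcov n x
    exact le_of_lt (lt_of_le_of_lt
      (Metric.infDist_le_dist_of_mem (Finset.mem_coe.mpr hy)) hlt)
  · -- pair-counting bound
    intro n
    set T : Finset (M × M) :=
      ((V n) ×ˢ (V n)).filter (fun p => 0 < dist p.1 p.2 ∧ dist p.1 p.2 < 3 * η n)
      with hT
    set Q : Finset (Sym2 M) := T.image (fun p => s(p.1, p.2)) with hQ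
    have hdval : (3 : ℝ) * 2 ^ (-(n:ℝ)) * Δ = 3 * η n := by
      rw [hηdef]; ring
    have hPsub : {q : Sym2 M | ∃ x ∈ V n, ∃ y ∈ V n, q = s(x, y) ∧
        0 < dist x y ∧ dist x y < 3 * 2 ^ (-(n : ℝ)) * Δ} ⊆ (Q : Set (Sym2 M)) := by
      rintro q ⟨x, hx, y, hy, hq, h1, h2⟩
      rw [hdval] at h2
      refine Finset.mem_coe.mpr (Finset.mem_image.mpr ⟨(x, y), ?_, hq.symm⟩)
      exact Finset.mem_filter.mpr ⟨Finset.mem_product.mpr ⟨hx, hy⟩, h1, h2⟩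
    have hncard : (Set.ncard {q : Sym2 M | ∃ x ∈ V n, ∃ y ∈ V n, q = s(x, y) ∧
        0 < dist x y ∧ dist x y < 3 * 2 ^ (-(n : ℝ)) * Δ}) ≤ Q.card := by
      have := Set.ncard_le_ncard hPsub Q.finite_toSet
      rwa [Set.ncard_coe_finset] at this
    have hTcard : T.card ≤ (V n).card * n₂ ^ 3 := by
      have hTsub : T ⊆ (V n).biUnion
          (fun x => (((V n).filter fun y => dist x y < 3 * η n)).image (Prod.mk x)) := by
        intro p hp
        rw [hT, Finset.mem_filter, Finset.mem_product] at hp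
        obtain ⟨⟨h1, h2⟩, _, h4⟩ := hp
        exact Finset.mem_biUnion.mpr ⟨p.1, h1,
          Finset.mem_image.mpr ⟨p.2, Finset.mem_filter.mpr ⟨h2, h4⟩, rfl⟩⟩
      calc T.card ≤ _ := Finset.card_le_card hTsub
        _ ≤ ∑ x ∈ V n,
            ((((V n).filter fun y => dist x y < 3 * η n)).image (Prod.mk x)).card :=
          Finset.card_biUnion_le
        _ ≤ ∑ _x ∈ V n, n₂ ^ 3 := Finset.sum_le_sum (fun x _ =>
            le_trans Finset.card_image_le
              (neighbor_card_le hdouble (hηpos n) (hVsep n) x))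
        _ = (V n).card * n₂ ^ 3 := by rw [Finset.sum_const]; ring
    have hQT : Q.card ≤ T.card := Finset.card_image_le
    have hchain : (Set.ncard {q : Sym2 M | ∃ x ∈ V n, ∃ y ∈ V n, q = s(x, y) ∧
        0 < dist x y ∧ dist x y < 3 * 2 ^ (-(n : ℝ)) * Δ} : ℝ) ≤
        ((V n).card : ℝ) * (n₂:ℝ) ^ 3 := by
      have h := hncard.trans (hQT.trans hTcard)
      exact_mod_cast h
    have h34 : ((n₂:ℝ)) ^ 3 ≤ (n₂:ℝ) ^ 4 := by
      have h1 : (1:ℝ) ≤ (n₂:ℝ) := by exact_mod_cast hn₂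
      exact pow_le_pow_right₀ h1 (by norm_num)
    calc (Set.ncard {q : Sym2 M | ∃ x ∈ V n, ∃ y ∈ V n, q = s(x, y) ∧
          0 < dist x y ∧ dist x y < 3 * 2 ^ (-(n : ℝ)) * Δ} : ℝ) ≤
        ((V n).card : ℝ) * (n₂:ℝ) ^ 3 := hchain
      _ ≤ (c * 2 ^ d * 2 ^ (d * (n:ℝ))) * (n₂:ℝ) ^ 3 :=
          mul_le_mul_of_nonneg_right (hcard2 n) (by positivity)
      _ = (c * 2 ^ d * (n₂:ℝ) ^ 3) * 2 ^ (d * (n:ℝ)) := by ring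
      _ ≤ (c * 3 ^ d * (n₂:ℝ) ^ 4) * 2 ^ (d * (n:ℝ)) := by
          apply mul_le_mul_of_nonneg_right _ (h2pos _).le
          have hc0 : (0:ℝ) ≤ c := by linarith
          have h2d : (0:ℝ) ≤ (2:ℝ) ^ d := (h2pos d).le
          have hn0 : (0:ℝ) ≤ (n₂:ℝ) ^ 3 := by positivity
          have h3d : (0:ℝ) ≤ (3:ℝ) ^ d := (Real.rpow_pos_of_pos (by norm_num) d).le
          have := mul_le_mul (mul_le_mul_of_nonneg_left h23 hc0) h34 hn0
            (by positivity)
          exact this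
      _ = c * 3 ^ d * (n₂:ℝ) ^ 4 * 2 ^ (d * (n:ℝ)) := by ring
end
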